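/- arXiv:2505.05793 — 5 statements merged into one kernel-verified Lean document; each statement's English description precedes it below -/
import Mathlib

section
/- Let X be a real-valued random variable with finite mean whose law has a density f with respect to Lebesgue measure satisfying f ≤ M almost everywhere for a constant M > 0, and let U be a random variable uniformly distributed on the interval [−1/(2M), 1/(2M)]. Then for every convex function φ : ℝ → ℝ for which both expectations are finite, E[φ(U)] ≤ E[φ(X − E[X])]. -/
/-!
Let `μ` be the law of `U` and `ν` that of `X - E X`. Both are centred, `μ = M • volume` on
`I = [-a, a]` with `a = 1/(2M)` and `μ = 0` off `I`, while `ν ≤ M • volume`; so `ν ≤ μ` on `I`.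
If `L` is the chord of `φ` over `I`, then `ψ = φ - L` is `≤ 0` on `I` and `≥ 0` off `I`, hence
`∫ ψ dμ ≤ ∫ ψ dν`: `ν` takes mass away from `I`, where `ψ ≤ 0`, and puts it where `ψ ≥ 0`.
As `L` is affine and the means agree, `∫ L dμ = ∫ L dν`.
-/

open MeasureTheory Set

namespace ConvexOn

variable {φ : ℝ → ℝ} {a b x : ℝ}

theorem le_chord (hφ : ConvexOn ℝ univ φ) (hx : x ∈ Icc a b) (hab : a < b) :
    φ x ≤ φ a + (φ b - φ a) / (b - a) * (x - a) := by
  rcases eq_or_lt_of_le hx.1 with rfl | hax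
  · simp
  have hsec := hφ.secant_mono (mem_univ a) (mem_univ x) (mem_univ b) hax.ne' hab.ne' hx.2
  rw [div_le_iff₀ (sub_pos.2 hax)] at hsec
  linarith

theorem chord_le (hφ : ConvexOn ℝ univ φ) (hx : x ∉ Ioo a b) (hab : a < b) :
    φ a + (φ b - φ a) / (b - a) * (x - a) ≤ φ x := by
  rcases lt_trichotomy x a with hxa | rfl | hax
  · have hsec := hφ.secant_mono (mem_univ a) (mem_univ x) (mem_univ b) hxa.ne hab.ne'
      (hxa.trans hab).le
    rw [div_le_iff_of_neg (sub_neg.2 hxa)] at hsec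
    linarith
  · simp
  · have hbx : b ≤ x := not_lt.1 fun hxb => hx ⟨hax, hxb⟩
    have hsec := hφ.secant_mono (mem_univ a) (mem_univ b) (mem_univ x) hab.ne' hax.ne' hbx
    rw [le_div_iff₀ (sub_pos.2 hax)] at hsec
    linarith

end ConvexOn

theorem integral_le_integral_of_restrict_le {α : Type*} [MeasurableSpace α] {μ ν : Measure α}
    {I : Set α} (hI : MeasurableSet I) (hμ : μ Iᶜ = 0) (hres : ν.restrict I ≤ μ.restrict I)
    {ψ : α → ℝ} (hψI : ∀ x ∈ I, ψ x ≤ 0) (hψIc : ∀ x ∉ I, 0 ≤ ψ x)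
    (hψμ : Integrable ψ μ) (hψν : Integrable ψ ν) :
    ∫ x, ψ x ∂μ ≤ ∫ x, ψ x ∂ν := by
  have hμI : ∫ x, ψ x ∂μ = ∫ x in I, ψ x ∂μ := by
    rw [← integral_add_compl hI hψμ, Measure.restrict_eq_zero.2 hμ, integral_zero_measure,
      add_zero]
  have hIν : ∫ x in I, ψ x ∂ν ≤ ∫ x, ψ x ∂ν := by
    rw [← integral_add_compl hI hψν, le_add_iff_nonneg_right]
    exact setIntegral_nonneg hI.compl hψIc
  have hneg : ∫ x in I, -ψ x ∂ν ≤ ∫ x in I, -ψ x ∂μ :=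
    integral_mono_measure hres ((ae_restrict_iff' hI).2 (ae_of_all _ fun x hx =>
      neg_nonneg.2 (hψI x hx))) hψμ.restrict.neg
  rw [integral_neg, integral_neg, neg_le_neg_iff] at hneg
  rw [hμI]
  exact hneg.trans hIν

theorem integral_add_mul_sub {μ : Measure ℝ} [IsProbabilityMeasure μ]
    (hμ : Integrable (fun x => x) μ) (c s a : ℝ) :
    ∫ x, c + s * (x - a) ∂μ = c + s * (∫ x, x ∂μ - a) := by
  have hsub : Integrable (fun x => x - a) μ := hμ.sub (integrable_const a)
  rw [integral_add (integrable_const c) (hsub.const_mul s), integral_const_mul,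
    integral_sub hμ (integrable_const a)]
  simp

theorem ConvexOn.integral_le_integral_of_mean_eq {μ ν : Measure ℝ} [IsProbabilityMeasure μ]
    [IsProbabilityMeasure ν] {a b : ℝ} (hab : a < b) (hμ : μ (Icc a b)ᶜ = 0)
    (hres : ν.restrict (Icc a b) ≤ μ.restrict (Icc a b))
    (hμid : Integrable (fun x => x) μ) (hνid : Integrable (fun x => x) ν)
    (hmean : ∫ x, x ∂μ = ∫ x, x ∂ν) {φ : ℝ → ℝ} (hφ : ConvexOn ℝ univ φ)
    (hφμ : Integrable φ μ) (hφν : Integrable φ ν) :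
    ∫ x, φ x ∂μ ≤ ∫ x, φ x ∂ν := by
  set s := (φ b - φ a) / (b - a)
  have hchord {ρ : Measure ℝ} [IsFiniteMeasure ρ] (hρ : Integrable (fun x => x) ρ) :
      Integrable (fun x => φ a + s * (x - a)) ρ :=
    (integrable_const _).add ((hρ.sub (integrable_const a)).const_mul s)
  have key := integral_le_integral_of_restrict_le measurableSet_Icc hμ hres
    (ψ := fun x => φ x - (φ a + s * (x - a)))
    (fun x hx => sub_nonpos.2 (hφ.le_chord hx hab))
    (fun x hx => sub_nonneg.2 (hφ.chord_le (fun h => hx (Ioo_subset_Icc_self h)) hab))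
    (hφμ.sub (hchord hμid)) (hφν.sub (hchord hνid))
  rw [integral_sub hφμ (hchord hμid), integral_sub hφν (hchord hνid),
    integral_add_mul_sub hμid, integral_add_mul_sub hνid, hmean] at key
  linarith

theorem withDensity_ofReal_indicator_const {α : Type*} [MeasurableSpace α] (μ : Measure α)
    {s : Set α} (hs : MeasurableSet s) (c : ℝ) :
    μ.withDensity (fun x => ENNReal.ofReal (s.indicator (fun _ => c) x)) =
      ENNReal.ofReal c • μ.restrict s := by
  rw [← Function.comp_def ENNReal.ofReal, ← indicator_comp_of_zero ENNReal.ofReal_zero,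
    withDensity_indicator hs]
  exact withDensity_const _

theorem integral_id_smul_restrict_Icc_neg (c : ENNReal) (a : ℝ) :
    ∫ x, x ∂(c • volume.restrict (Icc (-a) a)) = 0 := by
  rcases le_total 0 a with ha | ha
  · rw [integral_smul_measure, integral_Icc_eq_integral_Ioc,
      ← intervalIntegral.integral_of_le (by linarith), integral_id]
    simp
  · rcases ha.eq_or_lt with rfl | ha
    · simp
    · simp [Icc_eq_empty_of_lt (by linarith : a < -a)]

theorem map_sub_const_withDensity_le {f : ℝ → ℝ} {M : ℝ}
    (hfM : ∀ᵐ x ∂(volume : Measure ℝ), f x ≤ M) (m : ℝ) :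
    (volume.withDensity fun x => ENNReal.ofReal (f x)).map (· - m) ≤
      ENNReal.ofReal M • volume := by
  have hdens : volume.withDensity (fun x => ENNReal.ofReal (f x)) ≤ ENNReal.ofReal M • volume :=
    (withDensity_mono (hfM.mono fun x hx => ENNReal.ofReal_le_ofReal hx)).trans_eq
      (withDensity_const _)
  calc _ ≤ (ENNReal.ofReal M • volume).map (· - m) :=
        Measure.map_mono hdens (measurable_sub_const m)
    _ = ENNReal.ofReal M • volume := by
        rw [Measure.map_smul, (measurePreserving_sub_right volume m).map_eq]

theorem integral_id_map_sub_integral {Ω : Type*} [MeasurableSpace Ω] {P : Measure Ω}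
    [IsProbabilityMeasure P] {X : Ω → ℝ} (hX : Integrable X P) :
    ∫ x, x ∂(P.map fun ω => X ω - ∫ ω', X ω' ∂P) = 0 := by
  rw [integral_map (hX.aemeasurable.sub_const _) measurable_id'.aestronglyMeasurable,
    integral_sub hX (integrable_const _)]
  simp

theorem ConvexOn.integral_smul_restrict_Icc_le {c : ENNReal} (hc : c ≠ ⊤) {a : ℝ} (ha : 0 < a)
    [IsProbabilityMeasure (c • volume.restrict (Icc (-a) a))] {ν : Measure ℝ}
    [IsProbabilityMeasure ν] (hν : ν ≤ c • volume) (hνid : Integrable (fun x => x) ν)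
    (hνmean : ∫ x, x ∂ν = 0) {φ : ℝ → ℝ} (hφ : ConvexOn ℝ univ φ)
    (hφμ : Integrable φ (c • volume.restrict (Icc (-a) a))) (hφν : Integrable φ ν) :
    ∫ x, φ x ∂(c • volume.restrict (Icc (-a) a)) ≤ ∫ x, φ x ∂ν := by
  refine hφ.integral_le_integral_of_mean_eq (neg_lt_self ha) ?_ ?_
    (continuous_id'.integrableOn_Icc.integrable.smul_measure hc) hνid ?_ hφμ hφν
  · rw [Measure.smul_apply, Measure.restrict_apply' measurableSet_Icc, compl_inter_self,
      measure_empty, smul_zero]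
  · rw [Measure.restrict_smul, Measure.restrict_restrict_of_subset subset_rfl,
      ← Measure.restrict_smul]
    exact Measure.restrict_mono subset_rfl hν
  · rw [integral_id_smul_restrict_Icc_neg, hνmean]

theorem uniform_convex_minorant_of_bounded_density_general
    {Ω Ω' : Type*} [MeasurableSpace Ω] [MeasurableSpace Ω']
    (P : Measure Ω) (P' : Measure Ω')
    [IsProbabilityMeasure P] [IsProbabilityMeasure P']
    (X : Ω → ℝ) (U : Ω' → ℝ) (hU : AEMeasurable U P')
    (f : ℝ → ℝ)
    (M : ℝ) (hM : 0 < M)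
    (hfM : ∀ᵐ x ∂(volume : Measure ℝ), f x ≤ M)
    (hmapX : Measure.map X P = volume.withDensity (fun x => ENNReal.ofReal (f x)))
    (hmapU : Measure.map U P' = volume.withDensity (fun x =>
      ENNReal.ofReal (Set.indicator (Set.Icc (-(1 / (2 * M))) (1 / (2 * M))) (fun _ => M) x)))
    (hint : Integrable X P)
    (φ : ℝ → ℝ) (hφ : ConvexOn ℝ Set.univ φ)
    (hφU : Integrable (fun ω => φ (U ω)) P')
    (hφX : Integrable (fun ω => φ (X ω - ∫ ω', X ω' ∂P)) P) :
    (∫ ω, φ (U ω) ∂P') ≤ ∫ ω, φ (X ω - ∫ ω', X ω' ∂P) ∂P := by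
  set m := ∫ ω, X ω ∂P
  have hXm : AEMeasurable (fun ω => X ω - m) P := hint.aemeasurable.sub_const m
  have hφc : Continuous φ := continuousOn_univ.1 (hφ.continuousOn isOpen_univ)
  set I := Icc (-(1 / (2 * M))) (1 / (2 * M))
  have hlawU : P'.map U = ENNReal.ofReal M • volume.restrict I :=
    hmapU.trans (withDensity_ofReal_indicator_const _ measurableSet_Icc M)
  have hlawX : P.map (fun ω => X ω - m) ≤ ENNReal.ofReal M • volume := by
    rw [show (fun ω => X ω - m) = (· - m) ∘ X from rfl,
      ← AEMeasurable.map_map_of_aemeasurable (measurable_sub_const m).aemeasurable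
        hint.aemeasurable, hmapX]
    exact map_sub_const_withDensity_le hfM m
  have : IsProbabilityMeasure (P.map fun ω => X ω - m) := Measure.isProbabilityMeasure_map hXm
  have : IsProbabilityMeasure (ENNReal.ofReal M • volume.restrict I) :=
    hlawU ▸ Measure.isProbabilityMeasure_map hU
  have hφU' := (integrable_map_measure hφc.aestronglyMeasurable hU).2 hφU
  have hφX' := (integrable_map_measure hφc.aestronglyMeasurable hXm).2 hφX
  have hidX := (integrable_map_measure measurable_id'.aestronglyMeasurable hXm).2
    (hint.sub (integrable_const m))
  rw [← integral_map hU hφc.aestronglyMeasurable, ← integral_map hXm hφc.aestronglyMeasurable,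
    hlawU]
  exact hφ.integral_smul_restrict_Icc_le ENNReal.ofReal_ne_top (by positivity) hlawX hidX
    (integral_id_map_sub_integral hint) (hlawU ▸ hφU') hφX'

/-- If `X` has density `f ≤ M` a.e. (w.r.t. Lebesgue) and `U` is uniform on
`[-1/(2M), 1/(2M)]`, then `E[φ(U)] ≤ E[φ(X - E X)]` for every convex `φ` with
both expectations finite. -/
theorem uniform_convex_minorant_of_bounded_density
    {Ω Ω' : Type*} [MeasurableSpace Ω] [MeasurableSpace Ω']
    (P : Measure Ω) (P' : Measure Ω')
    [IsProbabilityMeasure P] [IsProbabilityMeasure P']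
    (X : Ω → ℝ) (U : Ω' → ℝ) (hX : AEMeasurable X P) (hU : AEMeasurable U P')
    (f : ℝ → ℝ) (hf : ∀ x, 0 ≤ f x)
    (M : ℝ) (hM : 0 < M)
    (hfM : ∀ᵐ x ∂(volume : Measure ℝ), f x ≤ M)
    (hmapX : Measure.map X P = volume.withDensity (fun x => ENNReal.ofReal (f x)))
    (hmapU : Measure.map U P' = volume.withDensity (fun x =>
      ENNReal.ofReal (Set.indicator (Set.Icc (-(1 / (2 * M))) (1 / (2 * M))) (fun _ => M) x)))
    (hint : Integrable X P)
    (φ : ℝ → ℝ) (hφ : ConvexOn ℝ Set.univ φ)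
    (hφU : Integrable (fun ω => φ (U ω)) P')
    (hφX : Integrable (fun ω => φ (X ω - ∫ ω', X ω' ∂P)) P) :
    (∫ ω, φ (U ω) ∂P') ≤ ∫ ω, φ (X ω - ∫ ω', X ω' ∂P) ∂P :=
  uniform_convex_minorant_of_bounded_density_general P P' X U hU f M hM hfM hmapX hmapU hint φ hφ
    hφU hφX
end

section
/- Let X be a real-valued random variable with finite mean whose law has a density f with respect to Lebesgue measure with essential supremum M = ess sup f ∈ (0, ∞). Then for every real p ≥ 1, one has 1/(2^p (p+1)) ≤ M^p · E[|X − E[X]|^p], with equality when X is uniform on an interval of length 1/M. -/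
open MeasureTheory ProbabilityTheory Set Filter

lemma my_ae_le_of_essSup_eq {f : ℝ → ℝ} {M : ℝ} (hM : 0 < M)
    (h : essSup f volume = M) : ∀ᵐ x, f x ≤ M := by
  have hbdd : Filter.IsBoundedUnder (· ≤ ·) (ae volume) f := by
    by_contra hb
    have hempty : {a : ℝ | ∀ᵐ x, f x ≤ a} = ∅ := by
      rw [Set.eq_empty_iff_forall_notMem]
      intro a ha
      exact hb ⟨a, by simpa [Filter.eventually_map] using ha⟩
    have h0 : essSup f volume = 0 := by
      rw [essSup, Filter.limsup_eq, show {a : ℝ | ∀ᶠ x in ae volume, f x ≤ a} = ∅ from hempty,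
        Real.sInf_empty]
    rw [h] at h0; linarith
  have := ae_le_essSup (μ := volume) (f := f) hbdd
  rwa [h] at this

lemma my_arith {M p : ℝ} (hM : 0 < M) :
    M ^ p * ((1 / (2 * M)) ^ p / (p + 1)) = 1 / (2 ^ p * (p + 1)) := by
  have hc : (0:ℝ) < 1 / (2 * M) := by positivity
  have h1 : M ^ p * (1 / (2 * M)) ^ p = ((1:ℝ)/2) ^ p := by
    rw [← Real.mul_rpow hM.le hc.le]
    congr 1
    field_simp
  have h2 : ((1:ℝ)/2) ^ p = 1 / 2 ^ p := by
    rw [one_div, Real.inv_rpow (by norm_num : (0:ℝ) ≤ 2), one_div]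
  rw [← mul_div_assoc, h1, h2, div_div]


lemma my_rpow_cont {q : ℝ} (hq : 0 ≤ q) : Continuous fun t : ℝ => t ^ q :=
  continuous_iff_continuousAt.2 fun x => Real.continuousAt_rpow_const x q (Or.inr hq)

lemma my_interval_rpow' {y q : ℝ} (hq : 0 ≤ q) :
    ∫ t in (0:ℝ)..y, t ^ q = y ^ (q + 1) / (q + 1) := by
  rw [integral_rpow (Or.inl (by linarith))]
  rw [Real.zero_rpow (by linarith : q + 1 ≠ 0), sub_zero]

lemma my_interval_rpow {y p : ℝ} (hp : 1 ≤ p) :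
    ∫ t in (0:ℝ)..y, t ^ (p - 1) = y ^ p / p := by
  rw [my_interval_rpow' (by linarith : (0:ℝ) ≤ p - 1), sub_add_cancel]

lemma my_moment_lb {Ω : Type*} [MeasurableSpace Ω] (P : Measure Ω) [IsProbabilityMeasure P]
    (X : Ω → ℝ) (hX : AEMeasurable X P) (f : ℝ → ℝ)
    (M : ℝ) (hM : 0 < M) (hfM : ∀ᵐ x, f x ≤ M)
    (hmap : Measure.map X P = volume.withDensity fun x => ENNReal.ofReal (f x))
    (m p : ℝ) (hp : 1 ≤ p)
    (hmom : Integrable (fun ω => |X ω - m| ^ p) P) :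
    (1 / (2 * M)) ^ p / (p + 1) ≤ ∫ ω, |X ω - m| ^ p ∂P := by
  set c : ℝ := 1 / (2 * M) with hc_def
  have hc : 0 < c := by positivity
  set Y : Ω → ℝ := fun ω => |X ω - m| with hY_def
  have hYm : AEMeasurable Y P := (continuous_abs.measurable.comp_aemeasurable (hX.sub aemeasurable_const))
  have hYnn : ∀ ω, 0 ≤ Y ω := fun ω => abs_nonneg _
  -- tail bound
  have tail : ∀ t : ℝ, P {ω | Y ω ≤ t} ≤ ENNReal.ofReal (2 * M * t) := by
    intro t
    have hset : {ω | Y ω ≤ t} = X ⁻¹' (Icc (m - t) (m + t)) := by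
      ext ω
      simp only [hY_def, Set.mem_setOf_eq, Set.mem_preimage, Set.mem_Icc, abs_le]
      constructor <;> intro h <;> constructor <;> linarith [h.1, h.2]
    rw [hset, ← Measure.map_apply_of_aemeasurable hX measurableSet_Icc, hmap,
      withDensity_apply _ measurableSet_Icc]
    calc ∫⁻ x in Icc (m - t) (m + t), ENNReal.ofReal (f x)
        ≤ ∫⁻ _ in Icc (m - t) (m + t), ENNReal.ofReal M := by
          refine lintegral_mono_ae (ae_restrict_of_ae ?_)
          exact hfM.mono fun x hx => ENNReal.ofReal_le_ofReal hx
      _ = ENNReal.ofReal M * volume (Icc (m - t) (m + t)) := by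
          rw [setLIntegral_const]
      _ ≤ ENNReal.ofReal (2 * M * t) := by
          rw [Real.volume_Icc, ← ENNReal.ofReal_mul hM.le]
          exact ENNReal.ofReal_le_ofReal (by nlinarith)
  -- lower tail bound
  have tail2 : ∀ t : ℝ, 1 - ENNReal.ofReal (2 * M * t) ≤ P {ω | t ≤ Y ω} := by
    intro t
    have hcompl : {ω | t ≤ Y ω} = {ω | Y ω < t}ᶜ := by
      ext ω; simp [not_lt]
    have hnm : NullMeasurableSet {ω | Y ω < t} P :=
      nullMeasurableSet_lt hYm aemeasurable_const
    have h1 : P {ω | Y ω < t} ≤ ENNReal.ofReal (2 * M * t) :=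
      le_trans (measure_mono fun ω (h : Y ω < t) => le_of_lt h) (tail t)
    rw [hcompl, measure_compl₀ hnm (measure_ne_top P _), measure_univ]
    exact tsub_le_tsub_left h1 1
  -- layer cake
  have g_nn : ∀ᵐ t ∂volume.restrict (Ioi (0:ℝ)), 0 ≤ p * t ^ (p - 1) := by
    refine (ae_restrict_iff' measurableSet_Ioi).2 (ae_of_all _ fun t ht => ?_)
    exact mul_nonneg (by linarith) (Real.rpow_nonneg (le_of_lt ht) _)
  have g_cont : Continuous fun t : ℝ => p * t ^ (p - 1) :=
    continuous_const.mul (my_rpow_cont (by linarith))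
  have g_intble : ∀ t > (0:ℝ), IntervalIntegrable (fun t => p * t ^ (p - 1)) volume 0 t :=
    fun t _ => g_cont.intervalIntegrable 0 t
  have layer := lintegral_comp_eq_lintegral_meas_le_mul (f := Y)
    (g := fun t => p * t ^ (p - 1)) P (ae_of_all _ hYnn) hYm g_intble g_nn
  have hGof : ∀ ω, ENNReal.ofReal (∫ t in (0:ℝ)..Y ω, p * t ^ (p - 1))
      = ENNReal.ofReal (Y ω ^ p) := by
    intro ω
    congr 1
    rw [intervalIntegral.integral_const_mul, my_interval_rpow hp]
    field_simp
  rw [lintegral_congr hGof] at layer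
  -- lower bound the RHS
  set G : ℝ → ℝ := fun t => (1 - 2 * M * t) * (p * t ^ (p - 1)) with hG_def
  have hGcont : Continuous G := (continuous_const.sub (continuous_const.mul continuous_id)).mul g_cont
  have step1 : ∫⁻ t in Ioc 0 c, ENNReal.ofReal (G t)
      ≤ ∫⁻ t in Ioi 0, P {a | t ≤ Y a} * ENNReal.ofReal (p * t ^ (p - 1)) := by
    have mono1 : ∫⁻ t in Ioc 0 c, P {a | t ≤ Y a} * ENNReal.ofReal (p * t ^ (p - 1))
        ≤ ∫⁻ t in Ioi 0, P {a | t ≤ Y a} * ENNReal.ofReal (p * t ^ (p - 1)) :=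
      lintegral_mono' (Measure.restrict_mono Ioc_subset_Ioi_self le_rfl) le_rfl
    refine le_trans ?_ mono1
    refine lintegral_mono_ae ((ae_restrict_iff' measurableSet_Ioc).2 (ae_of_all _ fun t ht => ?_))
    have ht1 : 0 < t := ht.1
    have ht2 : 2 * M * t ≤ 1 := by
      have := ht.2
      rw [hc_def] at this
      rw [div_eq_mul_inv, one_mul] at this
      calc 2 * M * t ≤ 2 * M * (2*M)⁻¹ := by
            apply mul_le_mul_of_nonneg_left this (by positivity)
        _ = 1 := by field_simp
    have hgt : 0 ≤ p * t ^ (p - 1) :=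
      mul_nonneg (by linarith) (Real.rpow_nonneg ht1.le _)
    rw [hG_def]
    rw [ENNReal.ofReal_mul (by linarith), ENNReal.ofReal_sub _ (by positivity), ENNReal.ofReal_one]
    exact mul_le_mul_left (tail2 t) _
  -- compute the real integral
  have hGint : IntegrableOn G (Ioc 0 c) volume := (hGcont.intervalIntegrable 0 c).1
  have hGnn : 0 ≤ᵐ[volume.restrict (Ioc 0 c)] G := by
    refine (ae_restrict_iff' measurableSet_Ioc).2 (ae_of_all _ fun t ht => ?_)
    have ht1 : 0 < t := ht.1
    have ht2 : 2 * M * t ≤ 1 := by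
      have h := ht.2
      rw [hc_def, div_eq_mul_inv, one_mul] at h
      calc 2 * M * t ≤ 2 * M * (2*M)⁻¹ := by
            apply mul_le_mul_of_nonneg_left h (by positivity)
        _ = 1 := by field_simp
    exact mul_nonneg (by linarith) (mul_nonneg (by linarith) (Real.rpow_nonneg ht1.le _))
  have hp0 : p ≠ 0 := by linarith
  have h2mc : 2 * M * c = 1 := by rw [hc_def]; field_simp
  have hGval : ∫ t in Ioc 0 c, G t = c ^ p / (p + 1) := by
    rw [← intervalIntegral.integral_of_le hc.le]
    have hsplit : ∀ t : ℝ, G t = p * t ^ (p - 1) - (2 * M * p) * t ^ p := by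
      intro t
      have htp : t ^ (p - 1) * t = t ^ p := by
        rcases eq_or_ne t 0 with h | h
        · simp [h, Real.zero_rpow hp0]
        · rw [← Real.rpow_add_one h, sub_add_cancel]
      calc G t = p * t ^ (p - 1) - (2 * M * p) * (t ^ (p - 1) * t) := by rw [hG_def]; ring
        _ = p * t ^ (p - 1) - (2 * M * p) * t ^ p := by rw [htp]
    have int1 : IntervalIntegrable (fun t => p * t ^ (p - 1)) volume 0 c :=
      g_cont.intervalIntegrable 0 c
    have int2 : IntervalIntegrable (fun t => (2 * M * p) * t ^ p) volume 0 c :=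
      (continuous_const.mul (my_rpow_cont (by linarith : (0:ℝ) ≤ p))).intervalIntegrable 0 c
    calc ∫ t in (0:ℝ)..c, G t
        = ∫ t in (0:ℝ)..c, (p * t ^ (p - 1) - (2 * M * p) * t ^ p) := by
          exact intervalIntegral.integral_congr fun t _ => hsplit t
      _ = (∫ t in (0:ℝ)..c, p * t ^ (p - 1)) - ∫ t in (0:ℝ)..c, (2 * M * p) * t ^ p :=
          intervalIntegral.integral_sub int1 int2
      _ = p * (c ^ p / p) - (2 * M * p) * (c ^ (p + 1) / (p + 1)) := by
          rw [intervalIntegral.integral_const_mul, intervalIntegral.integral_const_mul,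
            my_interval_rpow hp, my_interval_rpow' (by linarith : (0:ℝ) ≤ p)]
      _ = c ^ p / (p + 1) := by
          have e1 : p * (c ^ p / p) = c ^ p := by field_simp
          have e2 : (2 * M * p) * (c ^ (p + 1) / (p + 1)) = p * c ^ p / (p + 1) := by
            rw [Real.rpow_add_one (ne_of_gt hc)]
            calc (2 * M * p) * (c ^ p * c / (p + 1))
                = (2 * M * c) * (p * c ^ p / (p + 1)) := by ring
              _ = p * c ^ p / (p + 1) := by rw [h2mc, one_mul]
          rw [e1, e2]
          have hp1 : p + 1 ≠ 0 := by linarith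
          field_simp
          ring
  -- conclude
  have chain : ENNReal.ofReal (c ^ p / (p + 1)) ≤ ∫⁻ ω, ENNReal.ofReal (Y ω ^ p) ∂P := by
    rw [layer]
    refine le_trans ?_ step1
    rw [← hGval]
    exact le_of_eq (ofReal_integral_eq_lintegral_ofReal hGint hGnn)
  have heq : ENNReal.ofReal (∫ ω, Y ω ^ p ∂P) = ∫⁻ ω, ENNReal.ofReal (Y ω ^ p) ∂P :=
    ofReal_integral_eq_lintegral_ofReal hmom
      (ae_of_all _ fun ω => Real.rpow_nonneg (hYnn ω) p)
  rw [← heq] at chain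
  exact (ENNReal.ofReal_le_ofReal_iff
    (integral_nonneg fun ω => Real.rpow_nonneg (hYnn ω) p)).1 chain

lemma my_uniform_case {Ω : Type*} [MeasurableSpace Ω] (P : Measure Ω) [IsProbabilityMeasure P]
    (X : Ω → ℝ) (hX : AEMeasurable X P)
    (f : ℝ → ℝ) (M : ℝ) (hM : 0 < M)
    (hmap : Measure.map X P = volume.withDensity (fun x => ENNReal.ofReal (f x)))
    (p : ℝ) (hp : 1 ≤ p)
    (a : ℝ) (hae : f =ᵐ[volume] Set.indicator (Set.Icc a (a + 1 / M)) (fun _ => M)) :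
    1 / (2 ^ p * (p + 1)) = M ^ p * ∫ ω, |X ω - ∫ ω', X ω' ∂P| ^ p ∂P := by
  have hMne : M ≠ 0 := ne_of_gt hM
  set b : ℝ := a + 1 / M with hb_def
  have hab : a < b := lt_add_of_pos_right a (by positivity)
  have hmap2 : Measure.map X P = (ENNReal.ofReal M) • volume.restrict (Icc a b) := by
    rw [hmap]
    rw [withDensity_congr_ae (g := (Icc a b).indicator fun _ => ENNReal.ofReal M)]
    · rw [withDensity_indicator measurableSet_Icc, withDensity_const]
    · refine hae.mono fun x hx => ?_
      show ENNReal.ofReal (f x) = _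
      rw [hx]
      by_cases h : x ∈ Icc a b <;> simp [Set.indicator, h]
  set m : ℝ := ∫ ω', X ω' ∂P with hm_def
  have him : ∫ x, x ∂(Measure.map X P) = m := by
    rw [hm_def]; simpa using integral_map hX aestronglyMeasurable_id
  have hm1 : m = M * ∫ x in Icc a b, x := by
    rw [← him, hmap2, integral_smul_measure, ENNReal.toReal_ofReal hM.le, smul_eq_mul]
  have hIcc_id : ∫ x in Icc a b, x = (b ^ 2 - a ^ 2) / 2 := by
    rw [integral_Icc_eq_integral_Ioc, ← intervalIntegral.integral_of_le hab.le, integral_id]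
  have hMba : M * (b - a) = 1 := by rw [hb_def]; field_simp; ring
  have hm : m = (a + b) / 2 := by
    rw [hm1, hIcc_id]; linear_combination ((a + b) / 2) * hMba
  -- the moment
  have hgc : Continuous fun x : ℝ => |x - m| ^ p :=
    (my_rpow_cont (by linarith : (0:ℝ) ≤ p)).comp ((continuous_id.sub continuous_const).abs)
  have hmom_eq : ∫ ω, |X ω - m| ^ p ∂P = M * ∫ x in Icc a b, |x - m| ^ p := by
    rw [show (∫ ω, |X ω - m| ^ p ∂P) = ∫ x, |x - m| ^ p ∂(Measure.map X P) from
      (integral_map hX hgc.aestronglyMeasurable).symm, hmap2, integral_smul_measure,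
      ENNReal.toReal_ofReal hM.le, smul_eq_mul]
  set h : ℝ := 1 / (2 * M) with hh_def
  have hh : 0 < h := by positivity
  have ham : a - m = -h := by rw [hm, hb_def, hh_def]; field_simp; ring
  have hbm : b - m = h := by rw [hm, hb_def, hh_def]; field_simp; ring
  have habs_int : IntervalIntegrable (fun x : ℝ => |x| ^ p) volume (-h) 0 :=
    ((my_rpow_cont (by linarith : (0:ℝ) ≤ p)).comp continuous_abs).intervalIntegrable _ _
  have habs_int2 : IntervalIntegrable (fun x : ℝ => |x| ^ p) volume 0 h :=
    ((my_rpow_cont (by linarith : (0:ℝ) ≤ p)).comp continuous_abs).intervalIntegrable _ _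
  have hneg : ∫ x in (-h:ℝ)..0, |x| ^ p = ∫ x in (0:ℝ)..h, |x| ^ p := by
    have := intervalIntegral.integral_comp_neg (a := (0:ℝ)) (b := h) (fun x : ℝ => |x| ^ p)
    simpa [abs_neg] using this.symm
  have hpos : ∫ x in (0:ℝ)..h, |x| ^ p = h ^ (p + 1) / (p + 1) := by
    rw [show (∫ x in (0:ℝ)..h, |x| ^ p) = ∫ x in (0:ℝ)..h, x ^ p from
      intervalIntegral.integral_congr fun x hx => by
        rw [uIcc_of_le hh.le] at hx
        simp [abs_of_nonneg hx.1]]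
    exact my_interval_rpow' (by linarith)
  have hJ : ∫ x in Icc a b, |x - m| ^ p = 2 * (h ^ (p + 1) / (p + 1)) := by
    rw [integral_Icc_eq_integral_Ioc, ← intervalIntegral.integral_of_le hab.le,
      intervalIntegral.integral_comp_sub_right (fun x : ℝ => |x| ^ p) m, ham, hbm,
      ← intervalIntegral.integral_add_adjacent_intervals habs_int habs_int2,
      hneg, hpos]
    ring
  -- final arithmetic
  have h2mh : 2 * M * h = 1 := by rw [hh_def]; field_simp
  have harith : M * (2 * (h ^ (p + 1) / (p + 1))) = h ^ p / (p + 1) := by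
    rw [Real.rpow_add_one (ne_of_gt hh)]
    calc M * (2 * (h ^ p * h / (p + 1))) = (2 * M * h) * (h ^ p / (p + 1)) := by ring
      _ = h ^ p / (p + 1) := by rw [h2mh, one_mul]
  rw [hmom_eq, hJ, harith]
  -- M ^ p * (h ^ p / (p+1)) = 1 / (2^p (p+1))
  have h1 : M ^ p * (h ^ p / (p + 1)) = ((1:ℝ)/2) ^ p / (p + 1) := by
    rw [← mul_div_assoc, ← Real.mul_rpow hM.le hh.le]
    congr 2
    rw [hh_def]; field_simp
  rw [h1, show ((1:ℝ)/2) = (2:ℝ)⁻¹ from one_div 2,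
    Real.inv_rpow (by norm_num : (0:ℝ) ≤ 2)]
  have h2p : (0:ℝ) < 2 ^ p := Real.rpow_pos_of_pos two_pos p
  have hp1 : (0:ℝ) < p + 1 := by linarith
  field_simp

/-- For `X` with density `f` of essential supremum `M ∈ (0, ∞)` and `p ≥ 1`,
`1/(2^p (p+1)) ≤ M^p E|X - E X|^p`, with equality when `X` is uniform on an
interval of length `1/M`. -/
theorem pow_essSup_mul_absolute_central_moment_lower_bound
    {Ω : Type*} [MeasurableSpace Ω] (P : Measure Ω) [IsProbabilityMeasure P]
    (X : Ω → ℝ) (hX : AEMeasurable X P)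
    (f : ℝ → ℝ) (hf : ∀ x, 0 ≤ f x)
    (M : ℝ) (hM : 0 < M) (hessSup : essSup f volume = M)
    (hmap : Measure.map X P = volume.withDensity (fun x => ENNReal.ofReal (f x)))
    (hint : Integrable X P)
    (p : ℝ) (hp : 1 ≤ p)
    (hmom : Integrable (fun ω => |X ω - ∫ ω', X ω' ∂P| ^ p) P) :
    1 / (2 ^ p * (p + 1)) ≤ M ^ p * ∫ ω, |X ω - ∫ ω', X ω' ∂P| ^ p ∂P ∧
    (∀ a : ℝ, (f =ᵐ[volume] Set.indicator (Set.Icc a (a + 1 / M)) (fun _ => M)) →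
      1 / (2 ^ p * (p + 1)) = M ^ p * ∫ ω, |X ω - ∫ ω', X ω' ∂P| ^ p ∂P) := by
  constructor
  · have hfM : ∀ᵐ x, f x ≤ M := my_ae_le_of_essSup_eq hM hessSup
    have hlb := my_moment_lb P X hX f M hM hfM hmap (∫ ω', X ω' ∂P) p hp hmom
    calc 1 / (2 ^ p * (p + 1)) = M ^ p * ((1 / (2 * M)) ^ p / (p + 1)) := (my_arith hM).symm
      _ ≤ M ^ p * ∫ ω, |X ω - ∫ ω', X ω' ∂P| ^ p ∂P :=
        mul_le_mul_of_nonneg_left hlb (Real.rpow_nonneg hM.le p)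
  · exact fun a hae => my_uniform_case P X hX f M hM hmap p hp a hae
end

section
/- Let Y be an integer-valued random variable with finite mean μ whose probability mass function is log-concave, and suppose μ ∈ ℤ. Then P(Y = μ)² ≤ 1/(1 + 2·Var(Y)). -/
/-!
Let `a k = P(Y = μ + k)` and compare it with the two-sided geometric law
`g k = (1 - r) / (1 + r) * r ^ |k|`, with `r` chosen so that its variance `2 r / (1 - r) ^ 2`
equals `Var Y`; then `g 0 ^ 2 = 1 / (1 + 2 Var Y)`. Suppose `a 0 > g 0`. On each half-line `g` is
log-linear, so `a / g` is log-concave there and `d = a - g` is positive on an integer interval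
around `0` and nonpositive outside it. Some quadratic `q` with `q 0 > 0` has the sign of `d`
everywhere, so `∑ q d > 0`; but `a` and `g` share their moments of order `0, 1, 2`, so `∑ q d = 0`.
-/

structure IsLogConcaveSeq (a : ℤ → ℝ) : Prop where
  mul_le_sq : ∀ k, a (k - 1) * a (k + 1) ≤ a k ^ 2
  pos_of_le_of_le : ∀ ⦃j k l : ℤ⦄, j ≤ k → k ≤ l → 0 < a j → 0 < a l → 0 < a k

namespace IsLogConcaveSeq

variable {a : ℤ → ℝ}

lemma comp_neg (ha : IsLogConcaveSeq a) : IsLogConcaveSeq (fun k ↦ a (-k)) where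
  mul_le_sq k := by
    rw [mul_comm, neg_add, ← sub_eq_add_neg, neg_sub', sub_neg_eq_add]
    exact ha.mul_le_sq (-k)
  pos_of_le_of_le _ _ _ hjk hkl hj hl :=
    ha.pos_of_le_of_le (neg_le_neg hkl) (neg_le_neg hjk) hl hj

lemma comp_add_left (ha : IsLogConcaveSeq a) (m : ℤ) : IsLogConcaveSeq (fun k ↦ a (m + k)) where
  mul_le_sq k := by simpa only [add_sub_assoc, add_assoc] using ha.mul_le_sq (m + k)
  pos_of_le_of_le _ _ _ hjk hkl := ha.pos_of_le_of_le (by omega) (by omega)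

lemma div_geometric (ha : IsLogConcaveSeq a) {c ρ : ℝ} (hc : 0 < c) (hρ : 0 < ρ) :
    IsLogConcaveSeq (fun k ↦ a k / (c * ρ ^ k)) where
  mul_le_sq k := by
    have hgeom : c * ρ ^ (k - 1) * (c * ρ ^ (k + 1)) = (c * ρ ^ k) ^ 2 := by
      rw [zpow_sub₀ hρ.ne', zpow_add₀ hρ.ne', zpow_one]
      field_simp
    rw [div_mul_div_comm, hgeom, div_pow]
    exact div_le_div_of_nonneg_right (ha.mul_le_sq k) (by positivity)
  pos_of_le_of_le j k l hjk hkl hj hl := by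
    have hg : ∀ i : ℤ, 0 < c * ρ ^ i := fun i ↦ by positivity
    exact div_pos (ha.pos_of_le_of_le hjk hkl ((div_pos_iff_of_pos_right (hg j)).mp hj)
      ((div_pos_iff_of_pos_right (hg l)).mp hl)) (hg k)

lemma le_of_sub_one_le (ha : IsLogConcaveSeq a) {j k : ℤ} (hjk : j ≤ k) (hj : 0 < a j)
    (hk : 0 < a k) (h : a (k - 1) ≤ a k) : a j ≤ a k := by
  induction k, hjk using Int.leInduction with
  | base => exact le_rfl
  | succ k hjk ih =>
    rw [add_sub_cancel_right] at h
    rcases hjk.eq_or_lt with rfl | hjk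
    · exact h
    have hk' : 0 < a k := ha.pos_of_le_of_le hjk.le (by omega) hj hk
    have hstep : a (k - 1) ≤ a k := by
      refine le_of_mul_le_mul_right ?_ hk
      calc a (k - 1) * a (k + 1) ≤ a k ^ 2 := ha.mul_le_sq k
        _ = a k * a k := sq _
        _ ≤ a k * a (k + 1) := mul_le_mul_of_nonneg_left h hk'.le
    exact (ih hk' hstep).trans h

lemma min_le (ha : IsLogConcaveSeq a) {j k l : ℤ} (hjk : j ≤ k) (hkl : k ≤ l) (hj : 0 < a j)
    (hl : 0 < a l) : min (a j) (a l) ≤ a k := by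
  have hk := ha.pos_of_le_of_le hjk hkl hj hl
  rcases le_or_gt (a (k - 1)) (a k) with hleft | hleft
  · exact min_le_of_left_le (ha.le_of_sub_one_le hjk hj hk hleft)
  rcases le_or_gt (a (k + 1)) (a k) with hright | hright
  · have := ha.comp_neg.le_of_sub_one_le (neg_le_neg hkl) (by simpa using hl) (by simpa using hk)
      (by rwa [neg_sub', neg_neg, sub_neg_eq_add])
    exact min_le_of_right_le (by simpa using this)
  · exact absurd (ha.mul_le_sq k) (by nlinarith [mul_lt_mul'' hleft hright hk.le hk.le])

lemma geometric_lt (ha : IsLogConcaveSeq a) {c ρ : ℝ} (hc : 0 < c) (hρ : 0 < ρ) {j k l : ℤ}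
    (hjk : j ≤ k) (hkl : k ≤ l) (hj : c * ρ ^ j < a j) (hl : c * ρ ^ l < a l) :
    c * ρ ^ k < a k := by
  have hg : ∀ i : ℤ, 0 < c * ρ ^ i := fun i ↦ by positivity
  have hj' : 1 < a j / (c * ρ ^ j) := (one_lt_div (hg j)).mpr hj
  have hl' : 1 < a l / (c * ρ ^ l) := (one_lt_div (hg l)).mpr hl
  have := (ha.div_geometric hc hρ).min_le hjk hkl (one_pos.trans hj') (one_pos.trans hl')
  exact (one_lt_div (hg k)).mp ((lt_min hj' hl').trans_le this)

end IsLogConcaveSeq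

lemma exists_affine_mul_nonneg_of_single_sign_change {d : ℤ → ℝ} (h0 : 0 < d 0)
    (hd : ∀ ⦃j k : ℤ⦄, 0 ≤ j → j ≤ k → 0 < d k → 0 < d j) :
    ∃ α β : ℝ, 0 < α ∧ β ≤ 0 ∧ ∀ k : ℤ, 0 ≤ k → 0 ≤ (α + β * k) * d k := by
  by_cases hpos : ∀ k : ℤ, 0 ≤ k → 0 < d k
  · exact ⟨1, 0, one_pos, le_rfl, fun k hk ↦ by simpa using (hpos k hk).le⟩
  push Not at hpos
  obtain ⟨t, ⟨ht0, hdt⟩, hmin⟩ := Int.exists_least_of_bdd ⟨0, fun z hz ↦ hz.1⟩ hpos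
  have ht : (0 : ℝ) < t := by
    exact_mod_cast ht0.lt_of_ne (by rintro rfl; exact hdt.not_gt h0)
  refine ⟨t, -1, ht, by norm_num, fun k hk ↦ ?_⟩
  rcases lt_or_ge k t with hkt | hkt
  · have hdk : 0 < d k := not_le.mp fun h ↦ (hmin k ⟨hk, h⟩).not_gt hkt
    have : (k : ℝ) < t := by exact_mod_cast hkt
    exact mul_nonneg (by linarith) hdk.le
  · have hdk : d k ≤ 0 := not_lt.mp fun h ↦ hdt.not_gt (hd ht0 hkt h)
    have : (t : ℝ) ≤ k := by exact_mod_cast hkt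
    exact mul_nonneg_of_nonpos_of_nonpos (by linarith) hdk

lemma apply_zero_nonpos_of_moments_eq_zero {d : ℤ → ℝ} (h0 : HasSum d 0)
    (h1 : HasSum (fun k : ℤ ↦ (k : ℝ) * d k) 0) (h2 : HasSum (fun k : ℤ ↦ (k : ℝ) ^ 2 * d k) 0)
    (hright : ∀ ⦃j k : ℤ⦄, 0 ≤ j → j ≤ k → 0 < d k → 0 < d j)
    (hleft : ∀ ⦃j k : ℤ⦄, k ≤ j → j ≤ 0 → 0 < d k → 0 < d j) : d 0 ≤ 0 := by
  by_contra! hd0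
  obtain ⟨α, β, hα, hβ, hR⟩ := exists_affine_mul_nonneg_of_single_sign_change hd0 hright
  obtain ⟨α', β', hα', hβ', hL⟩ :=
    exists_affine_mul_nonneg_of_single_sign_change (d := fun k ↦ d (-k)) (by simpa using hd0)
      fun j k hj hjk hk ↦ hleft (neg_le_neg hjk) (neg_nonpos.mpr hj) hk
  have hf : HasSum (fun k : ℤ ↦ (α + β * k) * (α' - β' * k) * d k) 0 := by
    have hexpand : ∀ k : ℤ, (α + β * k) * (α' - β' * k) * d k =
        α * α' * d k + (β * α' - α * β') * (k * d k) - β * β' * (k ^ 2 * d k) := fun k ↦ by ring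
    simpa only [hexpand, mul_zero, add_zero, sub_zero] using
      ((h0.mul_left (α * α')).add (h1.mul_left (β * α' - α * β'))).sub (h2.mul_left (β * β'))
  have hf_nonneg : ∀ k : ℤ, 0 ≤ (α + β * k) * (α' - β' * k) * d k := by
    intro k
    rcases le_total 0 k with hk | hk
    · have : (0 : ℝ) ≤ k := by exact_mod_cast hk
      have : 0 < α' - β' * k := by nlinarith
      simpa only [mul_comm (α + β * k), mul_assoc] using mul_nonneg this.le (hR k hk)
    · have : (k : ℝ) ≤ 0 := by exact_mod_cast hk
      have : 0 < α + β * k := by nlinarith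
      have hLk := hL (-k) (neg_nonneg.mpr hk)
      push_cast at hLk
      simpa only [neg_neg, mul_neg, ← sub_eq_add_neg, mul_assoc] using mul_nonneg this.le hLk
  have := congr_fun ((hasSum_zero_iff_of_nonneg hf_nonneg).mp hf) 0
  simp only [Int.cast_zero, mul_zero, add_zero, sub_zero, Pi.zero_apply] at this
  exact (by positivity : 0 < α * α' * d 0).ne' this

lemma HasSum.int_natAbs {M : Type*} [AddCommGroup M] [TopologicalSpace M]
    [IsTopologicalAddGroup M] {φ : ℕ → M} {S : M} (h : HasSum φ S) :
    HasSum (fun k : ℤ ↦ φ k.natAbs) (S + (S - φ 0)) := by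
  refine HasSum.of_nat_of_neg_add_one (by simpa using h) ?_
  have hshift := (hasSum_nat_add_iff' 1).mpr h
  rw [Finset.sum_range_one] at hshift
  exact hshift.congr_fun fun n ↦ congrArg φ (by omega)

lemma HasSum.int_mul_natAbs {φ : ℕ → ℝ} {S : ℝ} (h : HasSum (fun n : ℕ ↦ (n : ℝ) * φ n) S) :
    HasSum (fun k : ℤ ↦ (k : ℝ) * φ k.natAbs) 0 := by
  rw [← add_neg_cancel S]
  refine HasSum.of_nat_of_neg_add_one (by simpa using h) ?_
  have hshift := ((hasSum_nat_add_iff' 1).mpr h).neg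
  rw [Finset.sum_range_one, Nat.cast_zero, zero_mul, sub_zero] at hshift
  refine hshift.congr_fun fun n ↦ ?_
  rw [show (-((n : ℤ) + 1)).natAbs = n + 1 by omega]
  push_cast
  ring

lemma hasSum_sq_mul_geometric {𝕜 : Type*} [NormedField 𝕜] [CompleteSpace 𝕜] {r : 𝕜}
    (hr : ‖r‖ < 1) : HasSum (fun n : ℕ ↦ (n : 𝕜) ^ 2 * r ^ n) (r * (1 + r) / (1 - r) ^ 3) := by
  have h1r : 1 - r ≠ 0 := sub_ne_zero.mpr fun h ↦ by simp [← h] at hr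
  have hchoose (k : ℕ) := hasSum_choose_mul_geometric_of_norm_lt_one k hr
  have hsum := ((hchoose 2).mul_left 2).sub ((hchoose 1).mul_left 3) |>.add (hchoose 0)
  rw [show r * (1 + r) / (1 - r) ^ 3 =
      2 * (1 / (1 - r) ^ (2 + 1)) - 3 * (1 / (1 - r) ^ (1 + 1)) + 1 / (1 - r) ^ (0 + 1) by
    field_simp; ring]
  -- `n ^ 2 = 2 * (n + 2).choose 2 - 3 * (n + 1).choose 1 + n.choose 0`
  refine hsum.congr_fun fun n ↦ ?_
  have hchoose_two : ((n + 2).choose 2 * 2 : ℕ) = (n + 2) * (n + 1) := by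
    simpa using (Nat.add_one_mul_choose_eq (n + 1) 1).symm
  have hcast := congrArg (Nat.cast : ℕ → 𝕜) hchoose_two
  simp only [Nat.choose_one_right, Nat.choose_zero_right, add_zero]
  push_cast at hcast ⊢
  linear_combination (-r ^ n) * hcast

noncomputable def twoSidedGeometric (r : ℝ) (k : ℤ) : ℝ := (1 - r) / (1 + r) * r ^ k.natAbs

section TwoSidedGeometric

variable {r : ℝ}

lemma twoSidedGeometric_of_nonneg {k : ℤ} (hk : 0 ≤ k) :
    twoSidedGeometric r k = (1 - r) / (1 + r) * r ^ k := by
  rw [twoSidedGeometric, ← zpow_natCast, Int.natAbs_of_nonneg hk]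

lemma twoSidedGeometric_of_nonpos {k : ℤ} (hk : k ≤ 0) :
    twoSidedGeometric r k = (1 - r) / (1 + r) * r⁻¹ ^ k := by
  rw [twoSidedGeometric, ← zpow_natCast, Int.ofNat_natAbs_of_nonpos hk, inv_zpow']

lemma hasSum_twoSidedGeometric (hr : |r| < 1) : HasSum (twoSidedGeometric r) 1 := by
  have h1r : 1 - r ≠ 0 := by linarith [le_abs_self r]
  have h1r' : 1 + r ≠ 0 := by linarith [neg_abs_le r]
  have := ((hasSum_geometric_of_abs_lt_one hr).mul_left ((1 - r) / (1 + r))).int_natAbs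
  rwa [show (1 - r) / (1 + r) * (1 - r)⁻¹ + ((1 - r) / (1 + r) * (1 - r)⁻¹
    - (1 - r) / (1 + r) * r ^ 0) = 1 by field_simp; ring] at this

lemma hasSum_mul_twoSidedGeometric (hr : |r| < 1) :
    HasSum (fun k : ℤ ↦ (k : ℝ) * twoSidedGeometric r k) 0 := by
  have := (hasSum_coe_mul_geometric_of_norm_lt_one (r := r) hr).mul_left ((1 - r) / (1 + r))
  have hφ : HasSum (fun n : ℕ ↦ (n : ℝ) * ((1 - r) / (1 + r) * r ^ n)) _ :=
    this.congr_fun fun n ↦ by ring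
  exact hφ.int_mul_natAbs

lemma hasSum_sq_mul_twoSidedGeometric (hr : |r| < 1) :
    HasSum (fun k : ℤ ↦ (k : ℝ) ^ 2 * twoSidedGeometric r k) (2 * r / (1 - r) ^ 2) := by
  have h1r : 1 - r ≠ 0 := by linarith [le_abs_self r]
  have h1r' : 1 + r ≠ 0 := by linarith [neg_abs_le r]
  have := ((hasSum_sq_mul_geometric (r := r) hr).mul_left ((1 - r) / (1 + r))).int_natAbs
  rw [show (1 - r) / (1 + r) * (r * (1 + r) / (1 - r) ^ 3) + ((1 - r) / (1 + r) *
    (r * (1 + r) / (1 - r) ^ 3) - (1 - r) / (1 + r) * ((0 : ℕ) ^ 2 * r ^ 0)) = 2 * r / (1 - r) ^ 2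
    by field_simp; ring] at this
  refine this.congr_fun fun k ↦ ?_
  rw [twoSidedGeometric, Nat.cast_natAbs, Int.cast_abs, sq_abs]
  ring

lemma exists_twoSidedGeometric_variance_eq {V : ℝ} (hV : 0 < V) :
    ∃ r : ℝ, 0 < r ∧ r < 1 ∧ 2 * r / (1 - r) ^ 2 = V ∧
      twoSidedGeometric r 0 ^ 2 = 1 / (1 + 2 * V) := by
  obtain ⟨s, hs0, hs2⟩ : ∃ s : ℝ, 0 ≤ s ∧ s ^ 2 = 1 + 2 * V :=
    ⟨_, Real.sqrt_nonneg _, Real.sq_sqrt (by linarith)⟩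
  have hs1 : 1 < s := by nlinarith
  have hs_add : s + 1 ≠ 0 := by positivity
  have hsub : 1 - (s - 1) / (s + 1) = 2 / (s + 1) := by field_simp; ring
  have hadd : 1 + (s - 1) / (s + 1) = 2 * s / (s + 1) := by field_simp; ring
  refine ⟨(s - 1) / (s + 1), div_pos (by linarith) (by linarith),
    (div_lt_one (by linarith)).mpr (by linarith), ?_, ?_⟩
  · rw [hsub]
    field_simp
    linear_combination hs2
  · rw [twoSidedGeometric, Int.natAbs_zero, pow_zero, mul_one, hsub, hadd, ← hs2]
    field_simp

end TwoSidedGeometric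

namespace IsLogConcaveSeq

variable {a : ℤ → ℝ}

theorem apply_zero_le_twoSidedGeometric (ha : IsLogConcaveSeq a) {r : ℝ} (hr0 : 0 < r)
    (hr1 : r < 1) (h0 : HasSum a 1) (h1 : HasSum (fun k : ℤ ↦ (k : ℝ) * a k) 0)
    (h2 : HasSum (fun k : ℤ ↦ (k : ℝ) ^ 2 * a k) (2 * r / (1 - r) ^ 2)) :
    a 0 ≤ twoSidedGeometric r 0 := by
  have hr : |r| < 1 := abs_lt.mpr ⟨by linarith, hr1⟩
  have hc : 0 < (1 - r) / (1 + r) := div_pos (by linarith) (by linarith)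
  by_contra! ha0
  have ha0_geom : ∀ ρ : ℝ, (1 - r) / (1 + r) * ρ ^ (0 : ℤ) < a 0 := fun ρ ↦ by
    simpa [twoSidedGeometric] using ha0
  refine (apply_zero_nonpos_of_moments_eq_zero (d := fun k ↦ a k - twoSidedGeometric r k)
    ?_ ?_ ?_ ?_ ?_).not_gt (sub_pos.mpr ha0)
  · simpa using h0.sub (hasSum_twoSidedGeometric hr)
  · simpa [mul_sub] using h1.sub (hasSum_mul_twoSidedGeometric hr)
  · simpa [mul_sub] using h2.sub (hasSum_sq_mul_twoSidedGeometric hr)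
  · intro j k hj hjk hk
    rw [sub_pos, twoSidedGeometric_of_nonneg (hj.trans hjk)] at hk
    rw [sub_pos, twoSidedGeometric_of_nonneg hj]
    exact ha.geometric_lt hc hr0 hj hjk (ha0_geom r) hk
  · intro j k hkj hj hk
    rw [sub_pos, twoSidedGeometric_of_nonpos (hkj.trans hj)] at hk
    rw [sub_pos, twoSidedGeometric_of_nonpos hj]
    exact ha.geometric_lt hc (inv_pos.mpr hr0) hkj hj hk (ha0_geom r⁻¹)

theorem sq_apply_le_of_hasSum (ha : IsLogConcaveSeq a) (ha_nonneg : ∀ k, 0 ≤ a k)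
    {m : ℤ} {V : ℝ} (h0 : HasSum a 1) (h1 : HasSum (fun k : ℤ ↦ ((k : ℝ) - m) * a k) 0)
    (h2 : HasSum (fun k : ℤ ↦ ((k : ℝ) - m) ^ 2 * a k) V) :
    a m ^ 2 ≤ 1 / (1 + 2 * V) := by
  rcases (h2.nonneg fun k ↦ mul_nonneg (sq_nonneg _) (ha_nonneg k)).eq_or_lt with rfl | hV
  · rw [mul_zero, add_zero, div_one]
    exact pow_le_one₀ (ha_nonneg m) (le_hasSum h0 m fun k _ ↦ ha_nonneg k)
  obtain ⟨r, hr0, hr1, hrV, hr⟩ := exists_twoSidedGeometric_variance_eq hV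
  have hshift (f : ℝ → ℝ) {S : ℝ} (h : HasSum (fun k : ℤ ↦ f ((k : ℝ) - m) * a k) S) :
      HasSum (fun k : ℤ ↦ f k * a (m + k)) S :=
    ((Equiv.addLeft m).hasSum_iff.mpr h).congr_fun fun k ↦ by simp
  have := (ha.comp_add_left m).apply_zero_le_twoSidedGeometric hr0 hr1
    (by simpa using hshift (fun _ ↦ 1) (by simpa using h0)) (hshift id h1)
    (hrV ▸ hshift (· ^ 2) h2)
  rw [← hr]
  exact pow_le_pow_left₀ (ha_nonneg m) (by simpa using this) 2

end IsLogConcaveSeq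

open MeasureTheory ProbabilityTheory

lemma hasSum_mul_measureReal_preimage {Ω : Type*} [MeasurableSpace Ω] {P : Measure Ω}
    {Y : Ω → ℤ} (hY : Measurable Y) {f : ℤ → ℝ} (hf : Integrable (fun ω ↦ f (Y ω)) P) :
    HasSum (fun k ↦ f k * P.real (Y ⁻¹' {k})) (∫ ω, f (Y ω) ∂P) := by
  have hfm : AEStronglyMeasurable f (P.map Y) := (measurable_of_countable f).aestronglyMeasurable
  have hfY := (integrable_map_measure hfm hY.aemeasurable).mpr hf
  rw [← Measure.sum_smul_dirac (P.map Y)] at hfY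
  rw [← integral_map hY.aemeasurable hfm, ← Measure.sum_smul_dirac (P.map Y)]
  refine (hasSum_integral_measure hfY).congr_fun fun k ↦ ?_
  rw [integral_smul_measure, integral_dirac, smul_eq_mul, mul_comm, ← measureReal_def,
    map_measureReal_apply hY (measurableSet_singleton k)]

/-- For `Y` an integer-valued random variable with log-concave probability mass function
whose mean `μ` is an integer, `P(Y = μ)² ≤ 1/(1 + 2 Var(Y))`. -/
theorem discrete_logConcave_prob_at_integer_mean_sq_le
    {Ω : Type*} [MeasurableSpace Ω] (P : Measure Ω) [IsProbabilityMeasure P]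
    (Y : Ω → ℤ) (hY : Measurable Y)
    (hlc : ∀ k : ℤ, (P (Y ⁻¹' {k - 1})).toReal * (P (Y ⁻¹' {k + 1})).toReal
      ≤ (P (Y ⁻¹' {k})).toReal ^ 2)
    (hsupp : ∀ j k l : ℤ, j ≤ k → k ≤ l →
      0 < P (Y ⁻¹' {j}) → 0 < P (Y ⁻¹' {l}) → 0 < P (Y ⁻¹' {k}))
    (hint : Integrable (fun ω => (Y ω : ℝ)) P)
    (m : ℤ) (hm : (∫ ω, (Y ω : ℝ) ∂P) = (m : ℝ)) :
    (P (Y ⁻¹' {m})).toReal ^ 2 ≤ 1 / (1 + 2 * variance (fun ω => (Y ω : ℝ)) P) := by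
  have hpos (k : ℤ) : 0 < P.real (Y ⁻¹' {k}) ↔ 0 < P (Y ⁻¹' {k}) :=
    ENNReal.toReal_pos_iff.trans (and_iff_left (measure_lt_top P _))
  have hp : IsLogConcaveSeq fun k ↦ P.real (Y ⁻¹' {k}) :=
    ⟨hlc, fun j k l hjk hkl hj hl ↦
      (hpos k).mpr (hsupp j k l hjk hkl ((hpos j).mp hj) ((hpos l).mp hl))⟩
  have hYm : AEStronglyMeasurable (fun ω ↦ (Y ω : ℝ)) P := by fun_prop
  by_cases hL2 : MemLp (fun ω ↦ (Y ω : ℝ)) 2 P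
  · refine hp.sq_apply_le_of_hasSum (fun k ↦ measureReal_nonneg) ?_ ?_ ?_
    · simpa using hasSum_mul_measureReal_preimage (P := P) hY (f := fun _ ↦ 1)
        (integrable_const 1)
    · have := hasSum_mul_measureReal_preimage hY (f := fun k ↦ (k : ℝ) - m)
        (hint.sub (integrable_const _))
      rwa [integral_sub hint (integrable_const _), hm, integral_const, probReal_univ, one_smul,
        sub_self] at this
    · have := hasSum_mul_measureReal_preimage hY (f := fun k ↦ ((k : ℝ) - m) ^ 2)
        (hL2.sub (memLp_const _)).integrable_sq
      rwa [variance_eq_integral hYm.aemeasurable, hm]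
  · rw [variance_of_not_memLp hYm hL2, mul_zero, add_zero, div_one]
    exact pow_le_one₀ measureReal_nonneg measureReal_le_one
end

section
/- Let μ be a Borel measure on ℝ and let φ : ℝ → ℝ be such that φ ∈ L¹(μ) and x ↦ x·φ(x) ∈ L¹(μ), with ∫ φ dμ = 0 and ∫ x·φ(x) dμ(x) = 0. Suppose there exist x₀ < x₁ such that φ(x) ≤ 0 for x ∈ (x₀, x₁) and φ(x) ≥ 0 for x ∉ [x₀, x₁]. Then for every convex function f : ℝ → ℝ with f·φ ∈ L¹(μ), ∫ f·φ dμ ≥ 0. Moreover, if there exists a strictly convex f with f·φ ∈ L¹(μ) and ∫ f·φ dμ = 0, then φ = 0 μ-almost everywhere. -/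
/-!
Let `L` be the secant line of `f` through `x₀` and `x₁`. Since `L` is affine, the two moment
conditions give `∫ L φ dμ = 0`, so `∫ f φ dμ = ∫ (f - L) φ dμ`. By convexity `f - L` is `≤ 0` on
`(x₀, x₁)` and `≥ 0` outside `[x₀, x₁]`, exactly the sign pattern of `φ`, so `(f - L) φ ≥ 0`.
If `f` is strictly convex, `f - L` vanishes only at `x₀` and `x₁`, so equality forces `φ` to be
carried by these two points; the moment conditions against `x - x₀` and `x - x₁` then kill
both atoms.
-/

open MeasureTheory Set

section Secant

variable {𝕜 : Type*} [Field 𝕜] {f : 𝕜 → 𝕜} {a b x : 𝕜}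

def secant (f : 𝕜 → 𝕜) (a b x : 𝕜) : 𝕜 := f a + (f b - f a) / (b - a) * (x - a)

@[simp]
lemma secant_left : secant f a b a = f a := by
  simp [secant]

lemma secant_right (hab : a ≠ b) : secant f a b b = f b := by
  rw [secant, div_mul_cancel₀ _ (sub_ne_zero.2 hab.symm)]
  ring

lemma sub_secant_eq (hxa : x ≠ a) :
    f x - secant f a b x = ((f x - f a) / (x - a) - (f b - f a) / (b - a)) * (x - a) := by
  rw [secant, sub_mul, div_mul_cancel₀ _ (sub_ne_zero.2 hxa)]
  ring

variable [LinearOrder 𝕜] [IsStrictOrderedRing 𝕜] {s : Set 𝕜}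

lemma ConvexOn.sub_secant_mul_nonneg (hf : ConvexOn 𝕜 s f) (ha : a ∈ s) (hb : b ∈ s) (hx : x ∈ s)
    (hab : a ≠ b) : 0 ≤ (f x - secant f a b x) * ((x - a) * (x - b)) := by
  rcases eq_or_ne x a with rfl | hxa
  · simp
  have hslope : 0 ≤ ((f x - f a) / (x - a) - (f b - f a) / (b - a)) * (x - b) := by
    rcases le_total x b with hxb | hbx
    · exact mul_nonneg_of_nonpos_of_nonpos
        (sub_nonpos.2 (hf.secant_mono ha hx hb hxa hab.symm hxb)) (sub_nonpos.2 hxb)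
    · exact mul_nonneg
        (sub_nonneg.2 (hf.secant_mono ha hb hx hab.symm hxa hbx)) (sub_nonneg.2 hbx)
  rw [sub_secant_eq hxa]
  nlinarith [mul_nonneg hslope (sq_nonneg (x - a))]

lemma StrictConvexOn.sub_secant_mul_pos (hf : StrictConvexOn 𝕜 s f) (ha : a ∈ s) (hb : b ∈ s)
    (hx : x ∈ s) (hab : a ≠ b) (hxa : x ≠ a) (hxb : x ≠ b) :
    0 < (f x - secant f a b x) * ((x - a) * (x - b)) := by
  have hslope : 0 < ((f x - f a) / (x - a) - (f b - f a) / (b - a)) * (x - b) := by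
    rcases hxb.lt_or_gt with hxb | hbx
    · exact mul_pos_of_neg_of_neg
        (sub_neg.2 (hf.secant_strict_mono ha hx hb hxa hab.symm hxb)) (sub_neg.2 hxb)
    · exact mul_pos
        (sub_pos.2 (hf.secant_strict_mono ha hb hx hab.symm hxa hbx))
        (sub_pos.2 hbx)
  rw [sub_secant_eq hxa]
  nlinarith [mul_pos hslope (sq_pos_of_ne_zero (sub_ne_zero.2 hxa))]

lemma ConvexOn.sub_secant_mul_nonneg_of_sub_mul_sub_mul_nonneg {φ : 𝕜 → 𝕜}
    (hf : ConvexOn 𝕜 univ f) (hab : a ≠ b) (hφ : ∀ x, 0 ≤ (x - a) * (x - b) * φ x) (x : 𝕜) :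
    0 ≤ (f x - secant f a b x) * φ x := by
  rcases eq_or_ne x a with rfl | hxa
  · simp
  rcases eq_or_ne x b with rfl | hxb
  · simp [secant_right hab]
  have hq : 0 < ((x - a) * (x - b)) ^ 2 :=
    sq_pos_of_ne_zero (mul_ne_zero (sub_ne_zero.2 hxa) (sub_ne_zero.2 hxb))
  refine (mul_nonneg_iff_of_pos_right hq).1 ?_
  nlinarith [mul_nonneg (hf.sub_secant_mul_nonneg (x := x) trivial trivial trivial hab) (hφ x)]

end Secant

lemma sub_mul_sub_mul_nonneg_of_two_crossings {φ : ℝ → ℝ} {a b : ℝ} (hab : a ≤ b)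
    (hneg : ∀ x ∈ Ioo a b, φ x ≤ 0) (hpos : ∀ x ∉ Icc a b, 0 ≤ φ x) (x : ℝ) :
    0 ≤ (x - a) * (x - b) * φ x := by
  rcases le_or_gt ((x - a) * (x - b)) 0 with hq | hq
  · rcases hq.lt_or_eq with hq | hq
    · have hx : x ∈ Ioo a b := ⟨by nlinarith, by nlinarith⟩
      exact mul_nonneg_of_nonpos_of_nonpos hq.le (hneg x hx)
    · simp [hq]
  · have hx : x ∉ Icc a b := fun hx => by nlinarith [hx.1, hx.2]
    exact mul_nonneg hq.le (hpos x hx)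

lemma ae_eq_zero_of_integral_eq_zero_of_ae_eq_zero_or_eq {α : Type*} [MeasurableSpace α]
    {μ : Measure α} {ψ : α → ℝ} (hψ : Integrable ψ μ) (h : ∫ x, ψ x ∂μ = 0) {c : ℝ}
    (hc : ∀ᵐ x ∂μ, ψ x = 0 ∨ ψ x = c) : ψ =ᵐ[μ] 0 := by
  rcases le_total 0 c with hc0 | hc0
  · refine (integral_eq_zero_iff_of_nonneg_ae ?_ hψ).1 h
    filter_upwards [hc] with x hx
    rcases hx with hx | hx <;> simp [hx, hc0]
  · have hneg : -ψ =ᵐ[μ] 0 := by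
      refine (integral_eq_zero_iff_of_nonneg_ae ?_ hψ.neg).1 (by simp [integral_neg, h])
      filter_upwards [hc] with x hx
      rcases hx with hx | hx <;> simp [hx, hc0]
    filter_upwards [hneg] with x hx
    simpa using hx

section Moments

variable {μ : Measure ℝ} {φ : ℝ → ℝ}
  (hφ : Integrable φ μ) (hxφ : Integrable (fun x => x * φ x) μ)

include hφ hxφ

lemma integrable_affine_mul (c s a : ℝ) : Integrable (fun x => (c + s * (x - a)) * φ x) μ :=
  ((hφ.const_mul (c - s * a)).add (hxφ.const_mul s)).congr (ae_of_all _ fun x => by simp; ring)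

variable (h0 : ∫ x, φ x ∂μ = 0) (h1 : ∫ x, x * φ x ∂μ = 0)

include h0 h1

lemma integral_affine_mul (c s a : ℝ) : ∫ x, (c + s * (x - a)) * φ x ∂μ = 0 :=
  calc ∫ x, (c + s * (x - a)) * φ x ∂μ
      = ∫ x, (c - s * a) * φ x + s * (x * φ x) ∂μ := by congr 1; ext x; ring
    _ = (c - s * a) * ∫ x, φ x ∂μ + s * ∫ x, x * φ x ∂μ := by
      rw [integral_add (hφ.const_mul _) (hxφ.const_mul _), integral_const_mul, integral_const_mul]
    _ = 0 := by simp [h0, h1]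

omit h0 h1 in
lemma integrable_sub_secant_mul {f : ℝ → ℝ} (hfφ : Integrable (fun x => f x * φ x) μ) (a b : ℝ) :
    Integrable (fun x => (f x - secant f a b x) * φ x) μ :=
  (hfφ.sub (integrable_affine_mul hφ hxφ (f a) ((f b - f a) / (b - a)) a)).congr
    (ae_of_all _ fun x => by simp only [Pi.sub_apply, secant]; ring)

lemma integral_sub_secant_mul {f : ℝ → ℝ} (hfφ : Integrable (fun x => f x * φ x) μ) (a b : ℝ) :
    ∫ x, (f x - secant f a b x) * φ x ∂μ = ∫ x, f x * φ x ∂μ := by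
  simp_rw [secant, sub_mul]
  rw [integral_sub hfφ (integrable_affine_mul hφ hxφ (f a) ((f b - f a) / (b - a)) a)]
  simp [integral_affine_mul hφ hxφ h0 h1]

lemma ae_eq_zero_of_ae_eq_zero_or_eq_or_eq {a b : ℝ} (hab : a ≠ b)
    (h : ∀ᵐ x ∂μ, φ x = 0 ∨ x = a ∨ x = b) : ∀ᵐ x ∂μ, φ x = 0 := by
  have hvanish : ∀ a b, (∀ᵐ x ∂μ, φ x = 0 ∨ x = a ∨ x = b) → ∀ᵐ x ∂μ, (x - a) * φ x = 0 := by
    intro a b h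
    refine ae_eq_zero_of_integral_eq_zero_of_ae_eq_zero_or_eq (c := (b - a) * φ b)
      (by simpa using integrable_affine_mul hφ hxφ 0 1 a)
      (by simpa using integral_affine_mul hφ hxφ h0 h1 0 1 a) ?_
    filter_upwards [h] with x hx
    rcases hx with hx | rfl | rfl
    · simp [hx]
    · simp
    · simp
  filter_upwards [hvanish a b h, hvanish b a (by filter_upwards [h] with x hx; tauto)]
    with x hxa hxb
  rcases mul_eq_zero.1 hxa with hxa | hxa
  · rcases mul_eq_zero.1 hxb with hxb | hxb
    · exact absurd ((sub_eq_zero.1 hxa).symm.trans (sub_eq_zero.1 hxb)) hab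
    · exact hxb
  · exact hxa

end Moments

/-- **Lemma 2.5 (two crossings).** Let `μ` be a Borel measure on `ℝ` and `φ ∈ L¹(μ)`
with `x φ(x) ∈ L¹(μ)`, `∫ φ dμ = 0 = ∫ x φ(x) dμ`, and suppose `φ ≤ 0` on `(x₀, x₁)`
and `φ ≥ 0` outside `[x₀, x₁]`.  Then `∫ f φ dμ ≥ 0` for every convex `f` with
`f φ ∈ L¹(μ)`; moreover if `∫ f φ dμ = 0` for some strictly convex such `f`, then
`φ = 0` μ-a.e. -/
theorem two_crossings_convex_nonneg
    (μ : Measure ℝ) (φ : ℝ → ℝ)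
    (hφ : Integrable φ μ) (hxφ : Integrable (fun x => x * φ x) μ)
    (h0 : (∫ x, φ x ∂μ) = 0) (h1 : (∫ x, x * φ x ∂μ) = 0)
    (x₀ x₁ : ℝ) (hx : x₀ < x₁)
    (hneg : ∀ x ∈ Set.Ioo x₀ x₁, φ x ≤ 0)
    (hpos : ∀ x ∉ Set.Icc x₀ x₁, 0 ≤ φ x) :
    (∀ f : ℝ → ℝ, ConvexOn ℝ Set.univ f → Integrable (fun x => f x * φ x) μ →
      0 ≤ ∫ x, f x * φ x ∂μ) ∧
    (∀ f : ℝ → ℝ, StrictConvexOn ℝ Set.univ f → Integrable (fun x => f x * φ x) μ →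
      (∫ x, f x * φ x ∂μ) = 0 → ∀ᵐ x ∂μ, φ x = 0) := by
  have hsign := sub_mul_sub_mul_nonneg_of_two_crossings hx.le hneg hpos
  refine ⟨fun f hf hfφ => ?_, fun f hf hfφ hzero => ?_⟩
  · rw [← integral_sub_secant_mul hφ hxφ h0 h1 hfφ x₀ x₁]
    exact integral_nonneg (hf.sub_secant_mul_nonneg_of_sub_mul_sub_mul_nonneg hx.ne hsign)
  · have hae : ∀ᵐ x ∂μ, (f x - secant f x₀ x₁ x) * φ x = 0 :=
      (integral_eq_zero_iff_of_nonneg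
        (hf.convexOn.sub_secant_mul_nonneg_of_sub_mul_sub_mul_nonneg hx.ne hsign)
        (integrable_sub_secant_mul hφ hxφ hfφ x₀ x₁)).1
        (by rwa [integral_sub_secant_mul hφ hxφ h0 h1 hfφ])
    refine ae_eq_zero_of_ae_eq_zero_or_eq_or_eq hφ hxφ h0 h1 hx.ne ?_
    filter_upwards [hae] with x hfx
    by_contra! hx'
    have hsecant := hf.sub_secant_mul_pos trivial trivial trivial hx.ne hx'.2.1 hx'.2.2
    exact left_ne_zero_of_mul hsecant.ne' ((mul_eq_zero.1 hfx).resolve_right hx'.1)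
end

section
/- Let μ be a Borel measure on ℝ, let n ≥ 2, and let φ : ℝ → ℝ be such that there exist real numbers x₁ < x₂ < ⋯ < xₙ with φ(x)·∏_{k=1}^n (x − x_k) ≥ 0 for all x ∈ ℝ. Suppose x ↦ x^k φ(x) ∈ L¹(μ) for all 0 ≤ k ≤ n, with ∫ x^k φ(x) dμ(x) = 0 for all 0 ≤ k ≤ n−1. Then for every function f : ℝ → ℝ that is (n−2)-times differentiable with convex (n−2)-nd derivative and f·φ ∈ L¹(μ), one has ∫ f·φ dμ ≥ 0. -/
/-!
Let `H` be the Lagrange interpolant of `f` at the nodes `xₖ`. Since `deg H < n`, the moment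
conditions give `∫ H φ dμ = 0`, so it suffices that `(f - H) φ ≥ 0`, i.e. that `f - H` has the
sign of `∏ (x - xₖ)`. Off the nodes write `f x - H x = c ∏ (x - xₖ)` and put
`p = H + c ∏ (X - xₖ)`: then `f - p` vanishes at `n + 1` points, so by Rolle
`(f - p)⁽ⁿ⁻²⁾` vanishes at three points. If `c < 0`, `p⁽ⁿ⁻²⁾` is a strictly concave quadratic,
which cannot meet the convex `f⁽ⁿ⁻²⁾` three times.
-/

open MeasureTheory Set Polynomial

theorem exists_finset_card_deriv_eq_zero {f : ℝ → ℝ} (hf : Continuous f) {s : Finset ℝ}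
    {k : ℕ} (hs : s.card = k + 1) (hzero : ∀ x ∈ s, f x = 0) :
    ∃ t : Finset ℝ, t.card = k ∧ ∀ x ∈ t, deriv f x = 0 := by
  set y := s.orderEmbOfFin hs
  have hy : ∀ i, f (y i) = 0 := fun i => hzero _ (s.orderEmbOfFin_mem hs i)
  have rolle (i : Fin k) : ∃ c ∈ Ioo (y i.castSucc) (y i.succ), deriv f c = 0 :=
    exists_deriv_eq_zero (y.strictMono i.castSucc_lt_succ) hf.continuousOn (by rw [hy, hy])
  choose z hz hz0 using rolle
  have hz_mono : StrictMono z := fun i j hij =>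
    calc z i < y i.succ := (hz i).2
      _ ≤ y j.castSucc := y.monotone (Fin.succ_le_castSucc_iff.mpr hij)
      _ < z j := (hz j).1
  refine ⟨Finset.univ.image z, ?_, ?_⟩
  · rw [Finset.card_image_of_injective _ hz_mono.injective, Finset.card_univ, Fintype.card_fin]
  · simpa using hz0

theorem exists_finset_card_iteratedDeriv_eq_zero {f : ℝ → ℝ} {m : ℕ}
    (hf : ∀ j < m, Continuous (iteratedDeriv j f)) {s : Finset ℝ} {k : ℕ}
    (hs : s.card = m + k) (hzero : ∀ x ∈ s, f x = 0) :
    ∃ t : Finset ℝ, t.card = k ∧ ∀ x ∈ t, iteratedDeriv m f x = 0 := by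
  induction m generalizing k with
  | zero => exact ⟨s, by simpa using hs, by simpa using hzero⟩
  | succ m ih =>
    obtain ⟨t, ht, ht0⟩ := ih (fun j hj => hf j (by omega)) (k := k + 1) (by omega)
    simpa only [iteratedDeriv_succ] using
      exists_finset_card_deriv_eq_zero (hf m m.lt_succ_self) ht ht0

theorem iteratedDeriv_sub_eval {f : ℝ → ℝ} {m : ℕ}
    (hf : ∀ j < m, Differentiable ℝ (iteratedDeriv j f)) (p : ℝ[X]) :
    iteratedDeriv m (fun x => f x - p.eval x) =
      fun x => iteratedDeriv m f x - (derivative^[m] p).eval x := by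
  induction m with
  | zero => simp
  | succ m ih =>
    ext x
    rw [iteratedDeriv_succ, ih fun j hj => hf j (by omega), iteratedDeriv_succ,
      Function.iterate_succ_apply', deriv_fun_sub (hf m m.lt_succ_self).differentiableAt
        (Polynomial.differentiable _).differentiableAt, Polynomial.deriv]

theorem strictConcaveOn_eval_iterate_derivative {p : ℝ[X]} {m : ℕ}
    (hp : p.natDegree ≤ m + 2) (hneg : p.coeff (m + 2) < 0) :
    StrictConcaveOn ℝ univ fun x => (derivative^[m] p).eval x := by
  have hderiv (q : ℝ[X]) : deriv (fun x => q.eval x) = fun x => (derivative q).eval x :=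
    funext fun _ => Polynomial.deriv q
  have htop : derivative^[m + 2] p = C ((m + 2).factorial * p.coeff (m + 2)) := by
    rw [eq_C_of_natDegree_le_zero ((natDegree_iterate_derivative _ _).trans (by omega)),
      coeff_iterate_derivative, zero_add, Nat.descFactorial_self, nsmul_eq_mul]
  refine strictConcaveOn_of_deriv2_neg' convex_univ (Polynomial.continuous _).continuousOn
    fun x _ => ?_
  rw [Function.iterate_succ_apply, Function.iterate_one, hderiv, hderiv,
    ← Function.iterate_succ_apply' derivative, ← Function.iterate_succ_apply' derivative, htop]
  simp only [eval_C]
  exact mul_neg_of_pos_of_neg (by positivity) hneg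

theorem ConvexOn.card_lt_three_of_eqOn_strictConcaveOn {g q : ℝ → ℝ}
    (hg : ConvexOn ℝ univ g) (hq : StrictConcaveOn ℝ univ q) {s : Finset ℝ}
    (hs : ∀ x ∈ s, g x = q x) : s.card < 3 := by
  by_contra! h3
  obtain ⟨t, hts, ht⟩ := Finset.exists_subset_card_eq h3
  set y := t.orderEmbOfFin ht
  have hy (i : Fin 3) : (g - q) (y i) = 0 :=
    sub_eq_zero.mpr (hs _ (hts (t.orderEmbOfFin_mem ht i)))
  have := (hg.sub_strictConcaveOn hq).slope_strict_mono_adjacent (mem_univ (y 0))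
    (mem_univ (y 2)) (y.strictMono (show (0 : Fin 3) < 1 by decide))
    (y.strictMono (show (1 : Fin 3) < 2 by decide))
  simp [hy] at this

theorem coeff_nonneg_of_eqOn_of_convexOn_iteratedDeriv {f : ℝ → ℝ} {m : ℕ}
    (hdiff : ∀ k < m, Differentiable ℝ (iteratedDeriv k f))
    (hconv : ConvexOn ℝ univ (iteratedDeriv m f)) {p : ℝ[X]} (hp : p.natDegree ≤ m + 2)
    {s : Finset ℝ} (hs : s.card = m + 3) (hfp : ∀ x ∈ s, f x = p.eval x) :
    0 ≤ p.coeff (m + 2) := by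
  by_contra! hneg
  have hsub {k : ℕ} (hk : k ≤ m) :=
    iteratedDeriv_sub_eval (m := k) (fun j hj => hdiff j (by omega)) p
  obtain ⟨t, ht, ht0⟩ := exists_finset_card_iteratedDeriv_eq_zero (f := fun x => f x - p.eval x)
    (fun k hk => by
      rw [hsub hk.le]
      exact ((hdiff k hk).sub (Polynomial.differentiable _)).continuous)
    hs (fun x hx => sub_eq_zero.mpr (hfp x hx))
  have := hconv.card_lt_three_of_eqOn_strictConcaveOn
    (strictConcaveOn_eval_iterate_derivative hp hneg) (s := t) fun x hx => by
      simpa [hsub le_rfl, sub_eq_zero] using ht0 x hx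
  omega

theorem Lagrange.natDegree_interpolate_lt {F ι : Type*} [Field F] [DecidableEq ι]
    {s : Finset ι} {v : ι → F} (hvs : InjOn v s) (hs : s.Nonempty) (r : ι → F) :
    (interpolate s v r).natDegree < s.card := by
  rcases eq_or_ne (interpolate s v r) 0 with h | h
  · rw [h, natDegree_zero]
    exact hs.card_pos
  · exact (natDegree_lt_iff_degree_lt h).mpr (degree_interpolate_lt r hvs)

theorem exists_nonneg_sub_interpolate_eq_mul_nodal {ι : Type*} [Fintype ι] [DecidableEq ι]
    {m : ℕ} (hι : Fintype.card ι = m + 2) {v : ι → ℝ} (hv : Function.Injective v) {f : ℝ → ℝ}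
    (hdiff : ∀ k < m, Differentiable ℝ (iteratedDeriv k f))
    (hconv : ConvexOn ℝ univ (iteratedDeriv m f)) (x : ℝ) :
    ∃ c, 0 ≤ c ∧ f x - (Lagrange.interpolate Finset.univ v fun i => f (v i)).eval x =
      c * (Lagrange.nodal Finset.univ v).eval x := by
  set H := Lagrange.interpolate Finset.univ v fun i => f (v i)
  set N := Lagrange.nodal Finset.univ v
  have hinj : InjOn v (Finset.univ : Finset ι) := hv.injOn
  have hH_node (i : ι) : H.eval (v i) = f (v i) := Lagrange.eval_interpolate_at_node _ hinj
    (Finset.mem_univ i)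
  by_cases hx : x ∈ range v
  · obtain ⟨i, rfl⟩ := hx
    exact ⟨0, le_rfl, by rw [hH_node, sub_self, zero_mul]⟩
  have hNx : N.eval x ≠ 0 := by
    rw [Lagrange.eval_nodal]
    exact Finset.prod_ne_zero_iff.mpr fun i _ h => hx ⟨i, (sub_eq_zero.mp h).symm⟩
  -- `c` is the divided difference `f[v₁, …, vₙ, x]`
  set c := (f x - H.eval x) / N.eval x
  refine ⟨c, ?_, (div_mul_cancel₀ _ hNx).symm⟩
  have hN_deg : N.natDegree = m + 2 := by rw [Lagrange.natDegree_nodal, Finset.card_univ, hι]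
  have hH_deg : H.natDegree < m + 2 := by
    simpa only [Finset.card_univ, hι] using Lagrange.natDegree_interpolate_lt hinj
      (Finset.univ_nonempty_iff.mpr (Fintype.card_pos_iff.mp (by omega))) (fun i => f (v i))
  have hp_deg : (H + C c * N).natDegree ≤ m + 2 :=
    (natDegree_add_le _ _).trans (max_le hH_deg.le ((natDegree_C_mul_le _ _).trans hN_deg.le))
  have hp_coeff : (H + C c * N).coeff (m + 2) = c := by
    rw [coeff_add, coeff_eq_zero_of_natDegree_lt hH_deg, coeff_C_mul, ← hN_deg,
      Lagrange.nodal_monic.coeff_natDegree, zero_add, mul_one]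
  set s := insert x (Finset.univ.image v)
  have hs : s.card = m + 3 := by
    rw [Finset.card_insert_of_notMem (by simpa using hx), Finset.card_image_of_injective _ hv,
      Finset.card_univ, hι]
  rw [← hp_coeff]
  refine coeff_nonneg_of_eqOn_of_convexOn_iteratedDeriv hdiff hconv hp_deg hs fun y hy => ?_
  rcases Finset.mem_insert.mp hy with rfl | hy
  · simp [c, div_mul_cancel₀ _ hNx]
  · obtain ⟨i, -, rfl⟩ := Finset.mem_image.mp hy
    simp [hH_node, N, Lagrange.eval_nodal_at_node (Finset.mem_univ i)]

section Moments

variable {μ : Measure ℝ} {φ : ℝ → ℝ} {n : ℕ} {p : ℝ[X]}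

theorem eval_mul_eq_sum_range (hp : p.natDegree < n) :
    (fun x => p.eval x * φ x) = fun x => ∑ i ∈ Finset.range n, p.coeff i * (x ^ i * φ x) := by
  ext x
  rw [eval_eq_sum_range' hp, Finset.sum_mul]
  exact Finset.sum_congr rfl fun i _ => mul_assoc _ _ _

theorem integrable_eval_mul (hint : ∀ k < n, Integrable (fun x => x ^ k * φ x) μ)
    (hp : p.natDegree < n) : Integrable (fun x => p.eval x * φ x) μ := by
  rw [eval_mul_eq_sum_range hp]
  exact integrable_finsetSum _ fun i hi => (hint i (Finset.mem_range.mp hi)).const_mul _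

theorem integral_eval_mul_eq_zero (hint : ∀ k < n, Integrable (fun x => x ^ k * φ x) μ)
    (hmom : ∀ k < n, ∫ x, x ^ k * φ x ∂μ = 0) (hp : p.natDegree < n) :
    ∫ x, p.eval x * φ x ∂μ = 0 := by
  rw [eval_mul_eq_sum_range hp,
    integral_finsetSum _ fun i hi => (hint i (Finset.mem_range.mp hi)).const_mul _]
  exact Finset.sum_eq_zero fun i hi => by
    rw [integral_const_mul, hmom i (Finset.mem_range.mp hi), mul_zero]

end Moments

/-- **Theorem 5.4 (Karlin–Novikoff criteria).** Let `μ` be a Borel measure on `ℝ`,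
`n ≥ 2`, and `φ : ℝ → ℝ` with `φ(x) ∏ₖ (x - xₖ) ≥ 0` for some `x₁ < ⋯ < xₙ`.
If `x^k φ(x) ∈ L¹(μ)` for `k ≤ n` and `∫ x^k φ dμ = 0` for `k ≤ n - 1`, then
`∫ f φ dμ ≥ 0` for every `f` that is `(n-2)`-times differentiable with convex
`(n-2)`-nd derivative and `f φ ∈ L¹(μ)`. -/
theorem karlin_novikoff_criteria
    (μ : Measure ℝ) (n : ℕ) (hn : 2 ≤ n)
    (φ : ℝ → ℝ) (xs : Fin n → ℝ) (hxs : StrictMono xs)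
    (hsign : ∀ x : ℝ, 0 ≤ φ x * ∏ k : Fin n, (x - xs k))
    (hint : ∀ k ≤ n, Integrable (fun x => x ^ k * φ x) μ)
    (hmom : ∀ k ≤ n - 1, (∫ x, x ^ k * φ x ∂μ) = 0)
    (f : ℝ → ℝ)
    (hdiff : ∀ k < n - 2, Differentiable ℝ (iteratedDeriv k f))
    (hconv : ConvexOn ℝ Set.univ (iteratedDeriv (n - 2) f))
    (hfφ : Integrable (fun x => f x * φ x) μ) :
    0 ≤ ∫ x, f x * φ x ∂μ := by
  set H := Lagrange.interpolate Finset.univ xs fun i => f (xs i)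
  have hH_deg : H.natDegree < n := by
    simpa only [Finset.card_univ, Fintype.card_fin] using
      Lagrange.natDegree_interpolate_lt hxs.injective.injOn
      (Finset.univ_nonempty_iff.mpr ⟨⟨0, by omega⟩⟩) (fun i => f (xs i))
  have hint' : ∀ k < n, Integrable (fun x => x ^ k * φ x) μ := fun k hk => hint k hk.le
  have hH_int : ∫ x, H.eval x * φ x ∂μ = 0 :=
    integral_eval_mul_eq_zero hint' (fun k hk => hmom k (by omega)) hH_deg
  have herr (x : ℝ) : 0 ≤ (f x - H.eval x) * φ x := by
    obtain ⟨c, hc, hcx⟩ := exists_nonneg_sub_interpolate_eq_mul_nodal (m := n - 2)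
      (by rw [Fintype.card_fin]; omega) hxs.injective hdiff hconv x
    rw [hcx, Lagrange.eval_nodal, mul_right_comm, mul_assoc]
    exact mul_nonneg hc (hsign x)
  calc 0 ≤ ∫ x, (f x - H.eval x) * φ x ∂μ := integral_nonneg herr
    _ = ∫ x, f x * φ x ∂μ := by
      simp_rw [sub_mul]
      rw [integral_sub hfφ (integrable_eval_mul hint' hH_deg), hH_int, sub_zero]
end
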